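/- arXiv:2209.00767 — 2 statements merged into one kernel-verified Lean document; each statement's English description precedes it below -/
import Mathlib

section
/- (Transition from symplectic Schur functions to odd symplectic characters) Let x^± = (x_1^{±1},…,x_n^{±1}) and let λ = (λ_1,…,λ_{n+1}) be a partition. Then sp_λ(x^±;z) = ∑ over all ε = (ε_1,…,ε_{n+1}) ∈ {0,1}^{n+1} of (−z^{−1})^{|ε|} · sp_{(λ_1−ε_1,…,λ_{n+1}−ε_{n+1})}(x_1^{±},…,x_n^{±},z^{±}), where |ε| = ∑ ε_i and a term is interpreted as 0 when (λ_1−ε_1,…,λ_{n+1}−ε_{n+1}) is not a partition (using the Jacobi–Trudi extension, the determinant vanishes in that case). -/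
open scoped BigOperators
noncomputable section

/-- The multiplicative inverse of `1 - a·w` in `R[[w]]` (its constant coefficient is the unit 1). -/
def geomInv (R : Type*) [CommRing R] (a : R) : PowerSeries R :=
  PowerSeries.invOfUnit (1 - PowerSeries.C a * PowerSeries.X) 1

/-- The generalized complete homogeneous functions attached to a list `xs` of elements of `R`:
`∏_{a ∈ xs} 1/(1 - a w) = ∑_k h_k w^k`, with `h_k = 0` for `k < 0`. -/
def genH (R : Type*) [CommRing R] (xs : List R) (k : ℤ) : R :=
  if k < 0 then 0 else PowerSeries.coeff k.toNat (xs.map (geomInv R)).prod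

/-- The list `x_1, …, x_n, x_1⁻¹, …, x_n⁻¹`. -/
def pmList {F : Type*} [Field F] {n : ℕ} (x : Fin n → F) : List F :=
  List.ofFn x ++ List.ofFn (fun i => (x i)⁻¹)

/-- Symplectic Jacobi–Trudi determinant
`det( h_{λ_i−i+j} + [j>1] h_{λ_i−i−j+2} )_{i,j=1}^N` (1-based indices). -/
def spJT (R : Type*) [CommRing R] (h : ℤ → R) (N : ℕ) (lam : Fin N → ℤ) : R :=
  Matrix.det (Matrix.of fun i j : Fin N =>
    h (lam i - (i : ℕ) + (j : ℕ)) +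
      if 1 ≤ (j : ℕ) then h (lam i - (i : ℕ) - (j : ℕ)) else 0)

/-- Skew symplectic Jacobi–Trudi determinant
`det( h_{λ_i−μ_j−i+j} + [j>l+1] h_{λ_i−i−j+2l+2} )_{i,j=1}^N` (1-based indices),
where `μ_j = 0` for `j > l`. -/
def spSkewJT (R : Type*) [CommRing R] (h : ℤ → R) (N l : ℕ)
    (lam : Fin N → ℤ) (mu : Fin l → ℤ) : R :=
  Matrix.det (Matrix.of fun i j : Fin N =>
    h (lam i - (if hj : (j : ℕ) < l then mu ⟨j, hj⟩ else 0) - (i : ℕ) + (j : ℕ)) +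
      if l < (j : ℕ) then h (lam i - (i : ℕ) - (j : ℕ) + 2 * l) else 0)

/-- Orthogonal Jacobi–Trudi determinant `det( h_{λ_i−i+j} − h_{λ_i−i−j} )_{i,j=1}^N`
(1-based indices). -/
def oJT (R : Type*) [CommRing R] (h : ℤ → R) (N : ℕ) (lam : Fin N → ℤ) : R :=
  Matrix.det (Matrix.of fun i j : Fin N =>
    h (lam i - (i : ℕ) + (j : ℕ)) - h (lam i - (i : ℕ) - (j : ℕ) - 2))

/-- Skew orthogonal Jacobi–Trudi determinant
`det( h_{λ_i−μ_j−i+j} − [j>l] h_{λ_i−i−j+2l} )_{i,j=1}^N` (1-based indices). -/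
def oSkewJT (R : Type*) [CommRing R] (h : ℤ → R) (N l : ℕ)
    (lam : Fin N → ℤ) (mu : Fin l → ℤ) : R :=
  Matrix.det (Matrix.of fun i j : Fin N =>
    h (lam i - (if hj : (j : ℕ) < l then mu ⟨j, hj⟩ else 0) - (i : ℕ) + (j : ℕ)) -
      if l ≤ (j : ℕ) then h (lam i - (i : ℕ) - (j : ℕ) + 2 * l - 2) else 0)

/-- Schur Jacobi–Trudi determinant `det( h_{λ_i−i+j} )_{i,j=1}^N`. -/
def schurJT (R : Type*) [CommRing R] (h : ℤ → R) (N : ℕ) (lam : Fin N → ℤ) : R :=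
  Matrix.det (Matrix.of fun i j : Fin N => h (lam i - (i : ℕ) + (j : ℕ)))

/-! Adding `z⁻¹` to the alphabet `x^±, z` multiplies the generating series by `1/(1 - z⁻¹w)`, so
`h_k(x^±; z) = h_k(x^±, z^±) - z⁻¹ h_{k-1}(x^±, z^±)`. Every row of the Jacobi–Trudi matrix
of `sp_λ(x^±; z)` is therefore the row of `λ_i` plus `-z⁻¹` times the row of `λ_i - 1` for the
alphabet `x^±, z^±`, and expanding the determinant multilinearly in its rows gives the sum
over `ε ∈ {0,1}^{n+1}`. -/

theorem one_sub_C_mul_X_mul_geomInv {R : Type*} [CommRing R] (a : R) :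
    (1 - PowerSeries.C a * PowerSeries.X) * geomInv R a = 1 :=
  PowerSeries.mul_invOfUnit _ _ (by simp)

theorem genH_perm {R : Type*} [CommRing R] {xs ys : List R} (h : xs.Perm ys) :
    genH R xs = genH R ys := by
  funext k
  simp only [genH, (h.map _).prod_eq]

theorem genH_eq_genH_cons_sub_mul {R : Type*} [CommRing R] (xs : List R) (b : R) (k : ℤ) :
    genH R xs k = genH R (b :: xs) k - b * genH R (b :: xs) (k - 1) := by
  set Q := ((b :: xs).map (geomInv R)).prod
  have hQ : (xs.map (geomInv R)).prod = (1 - PowerSeries.C b * PowerSeries.X) * Q := by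
    simp only [Q, List.map_cons, List.prod_cons, ← mul_assoc, one_sub_C_mul_X_mul_geomInv,
      one_mul]
  obtain hk | hk := lt_or_ge k 0
  · simp [genH, hk, show k - 1 < 0 by omega]
  lift k to ℕ using hk
  rw [genH, genH, genH, if_neg (by omega), if_neg (by omega), Int.toNat_natCast, hQ, sub_mul,
    one_mul, map_sub, mul_assoc, PowerSeries.coeff_C_mul]
  rcases k with _ | m
  · rw [if_pos (by omega), PowerSeries.coeff_zero_X_mul, mul_zero]
  · rw [if_neg (by omega), PowerSeries.coeff_succ_X_mul,
      show ((m + 1 : ℕ) - 1 : ℤ).toNat = m by omega]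

theorem pmList_snoc_perm {F : Type*} [Field F] {n : ℕ} (x : Fin n → F) (z : F) :
    (pmList (Fin.snoc x z)).Perm (z⁻¹ :: (pmList x ++ [z])) := by
  simp only [pmList, List.ofFn_succ', Fin.snoc_castSucc, Fin.snoc_last, List.concat_eq_append,
    ← List.append_assoc]
  refine (List.perm_append_singleton _ _).trans (.cons _ ?_)
  simp only [List.append_assoc]
  exact .append_left _ List.perm_append_comm

theorem Matrix.det_of_sum_rows {R ι κ : Type*} [CommRing R] [Fintype ι] [DecidableEq ι]
    [Fintype κ] (f : ι → κ → ι → R) :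
    (Matrix.of fun i j => ∑ e, f i e j).det =
      ∑ eps : ι → κ, (Matrix.of fun i j => f i (eps i) j).det := by
  have : (Matrix.of fun i j => ∑ e, f i e j) = fun i => ∑ e, f i e := by
    ext i j
    simp
  rw [this]
  exact Matrix.detRowAlternating.toMultilinearMap.map_sum f

theorem spJT_add_mul_shift {R : Type*} [CommRing R] (h : ℤ → R) (c : R) (N : ℕ)
    (lam : Fin N → ℤ) :
    spJT R (fun k => h k + c * h (k - 1)) N lam =
      ∑ eps : Fin N → Fin 2,
        c ^ (∑ i, (eps i : ℕ)) * spJT R h N (fun i => lam i - (eps i : ℕ)) := by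
  have rows : (Matrix.of fun i j : Fin N =>
      h (lam i - (i : ℕ) + (j : ℕ)) + c * h (lam i - (i : ℕ) + (j : ℕ) - 1) +
        if 1 ≤ (j : ℕ) then
          h (lam i - (i : ℕ) - (j : ℕ)) + c * h (lam i - (i : ℕ) - (j : ℕ) - 1) else 0) =
      Matrix.of fun i j : Fin N => ∑ e : Fin 2, c ^ (e : ℕ) *
        (h (lam i - (e : ℕ) - (i : ℕ) + (j : ℕ)) +
          if 1 ≤ (j : ℕ) then h (lam i - (e : ℕ) - (i : ℕ) - (j : ℕ)) else 0) := by
    ext i j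
    simp only [Matrix.of_apply, Fin.sum_univ_two, Fin.val_zero, Fin.val_one, pow_zero,
      pow_one, Nat.cast_zero, Nat.cast_one, sub_zero, one_mul]
    split_ifs <;> ring_nf
  unfold spJT
  rw [rows, Matrix.det_of_sum_rows]
  refine Finset.sum_congr rfl fun eps _ => ?_
  rw [← Finset.prod_pow_eq_pow_sum, ← Matrix.det_mul_column]
  rfl

theorem odd_symplectic_transition_general {F : Type*} [Field F] {n : ℕ}
    (x : Fin n → F) (z : F) (lam : Fin (n + 1) → ℕ) :
    spJT F (genH F (pmList x ++ [z])) (n + 1) (fun i => (lam i : ℤ)) =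
      ∑ eps : Fin (n + 1) → Fin 2,
        (-z⁻¹) ^ (∑ i, (eps i : ℕ)) *
          spJT F (genH F (pmList (Fin.snoc x z))) (n + 1)
            (fun i => (lam i : ℤ) - (eps i : ℕ)) := by
  have hH : genH F (pmList x ++ [z]) = fun k =>
      genH F (pmList (Fin.snoc x z)) k + -z⁻¹ * genH F (pmList (Fin.snoc x z)) (k - 1) := by
    funext k
    rw [genH_perm (pmList_snoc_perm x z), genH_eq_genH_cons_sub_mul (pmList x ++ [z]) z⁻¹,
      neg_mul, ← sub_eq_add_neg]
  rw [hH, spJT_add_mul_shift]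

/-- **Transition formula from symplectic Schur functions to odd symplectic characters.**
For a partition `λ = (λ_1,…,λ_{n+1})`,
`sp_λ(x^±;z) = ∑_{ε ∈ {0,1}^{n+1}} (−z⁻¹)^{|ε|} sp_{λ−ε}(x_1^±,…,x_n^±,z^±)`,
where a term is `0` when `λ−ε` is not a partition (the Jacobi–Trudi determinant
vanishes in that case). -/
theorem odd_symplectic_transition {F : Type*} [Field F] {n : ℕ}
    (x : Fin n → F) (hx : ∀ i, x i ≠ 0) (z : F) (hz : z ≠ 0)
    (lam : Fin (n + 1) → ℕ) (hlam : Antitone lam) :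
    spJT F (genH F (pmList x ++ [z])) (n + 1) (fun i => (lam i : ℤ)) =
      ∑ eps : Fin (n + 1) → Fin 2,
        (-z⁻¹) ^ (∑ i, (eps i : ℕ)) *
          spJT F (genH F (pmList (Fin.snoc x z))) (n + 1)
            (fun i => (lam i : ℤ) - (eps i : ℕ)) :=
  odd_symplectic_transition_general x z lam
end
end

section
/- (Vanishing criterion for skew universal symplectic functions) Let β = (β_1,…,β_l) and α = (α_1,…,α_{l+n+m}) be partitions. Then the skew universal symplectic function sp_{α/β}(x^±;z) = det( h_{α_i−β_j−i+j}(x^±;z) + [j>l+1]·h_{α_i−i−j+2l+2}(x^±;z) )_{i,j=1}^{l+n+m} (where β_j is taken as 0 for j > l) is zero unless β ⊆ α, i.e., β_i ≤ α_i for all i. -/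
open scoped BigOperators
noncomputable section

theorem Equiv.Perm.exists_le_and_le_apply {N : ℕ} (σ : Equiv.Perm (Fin N)) (k : Fin N) :
    ∃ i ≤ k, k ≤ σ i := by
  by_contra! h
  have hcard : (Finset.Iic k).card ≤ (Finset.Iio k).card :=
    Finset.card_le_card_of_injOn σ (fun i hi => Finset.mem_Iio.2 (h i (Finset.mem_Iic.1 hi)))
      σ.injective.injOn
  rw [Fin.card_Iic, Fin.card_Iio] at hcard
  omega

/-- The zero block has size `(N - k) × (k + 1)`, too large for a permutation to avoid. -/
theorem Matrix.det_eq_zero_of_apply_eq_zero_of_le_of_le {R : Type*} [CommRing R] {N : ℕ}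
    (A : Matrix (Fin N) (Fin N) R) (k : Fin N) (hA : ∀ i j, j ≤ k → k ≤ i → A i j = 0) :
    A.det = 0 := by
  rw [Matrix.det_apply']
  refine Finset.sum_eq_zero fun σ _ => ?_
  obtain ⟨j, hjk, hkσ⟩ := σ.exists_le_and_le_apply k
  exact mul_eq_zero_of_right _ (Finset.prod_eq_zero (Finset.mem_univ j) (hA _ _ hjk hkσ))

theorem genH_of_neg (R : Type*) [CommRing R] (xs : List R) {k : ℤ} (hk : k < 0) :
    genH R xs k = 0 :=
  if_pos hk

/-- The entries in rows `≥ k` and columns `≤ k` have negative index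
`λ_i - μ_j - i + j ≤ λ_k - μ_k < 0`. -/
theorem spSkewJT_eq_zero_of_lt {R : Type*} [CommRing R] (h : ℤ → R)
    (hneg : ∀ k < 0, h k = 0) {N l : ℕ} (hlN : l ≤ N) (lam : Fin N → ℤ) (hlam : Antitone lam)
    (mu : Fin l → ℤ) (hmu : Antitone mu) (k : Fin l) (hk : lam (Fin.castLE hlN k) < mu k) :
    spSkewJT R h N l lam mu = 0 := by
  refine Matrix.det_eq_zero_of_apply_eq_zero_of_le_of_le _ (Fin.castLE hlN k) fun i j hjk hki => ?_
  have hjk' : (j : ℕ) ≤ k := hjk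
  have hki' : (k : ℕ) ≤ i := hki
  have hjl : (j : ℕ) < l := by omega
  have hlam_le : lam i ≤ lam (Fin.castLE hlN k) := hlam hki
  have hmu_le : mu k ≤ mu ⟨j, hjl⟩ := hmu hjk'
  rw [Matrix.of_apply, dif_pos hjl, if_neg (by omega), add_zero]
  exact hneg _ (by omega)

/-- **Vanishing criterion for skew universal symplectic functions.**
For partitions `β = (β_1,…,β_l)` and `α = (α_1,…,α_{l+n+m})`, the skew universal
symplectic function
`sp_{α/β}(x^±;z) = det( h_{α_i−β_j−i+j}(x^±;z) + [j>l+1] h_{α_i−i−j+2l+2}(x^±;z) )`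
(with `β_j = 0` for `j > l`) is zero unless `β ⊆ α`, i.e. `β_i ≤ α_i` for all `i`. -/
theorem skew_universal_symplectic_vanishing {F : Type*} [Field F] {n m l : ℕ}
    (x : Fin n → F) (z : Fin m → F)
    (alpha : Fin (l + n + m) → ℕ) (halpha : Antitone alpha)
    (beta : Fin l → ℕ) (hbeta : Antitone beta)
    (hnot : ¬ ∀ i : Fin l, beta i ≤ alpha (Fin.castLE (by omega) i)) :
    spSkewJT F (genH F (pmList x ++ List.ofFn z)) (l + n + m) l
        (fun i => (alpha i : ℤ)) (fun i => (beta i : ℤ)) = 0 := by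
  obtain ⟨k, hk⟩ := not_forall.1 hnot
  exact spSkewJT_eq_zero_of_lt _ (fun _ => genH_of_neg F _) (by omega) _
    (Nat.mono_cast.comp_antitone halpha) _ (Nat.mono_cast.comp_antitone hbeta) k
    (Int.ofNat_lt.2 (not_le.1 hk))
end
end
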